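/- Let L be a finite-dimensional Lie algebra over any field F such that every maximal nilpotent subalgebra of L is a c-ideal of L. Then L is solvable. -/

import Mathlib

/-! Common definitions: c-ideals and related notions for Lie algebras
(following D. Towers, "C-ideals of Lie algebras"). -/

section Defs

variable (F : Type*) {L : Type*} [Field F] [LieRing L] [LieAlgebra F L]

/-- `B` is a *c-ideal* of `L`: there is an ideal `C` of `L` with `L = B + C` and
`B ∩ C ≤ B_L`, where `B_L` is the largest ideal of `L` contained in `B`; equivalently,
`B ∩ C` is contained in some ideal `D` of `L` with `D ≤ B`. -/
def IsCIdeal (B : LieSubalgebra F L) : Prop :=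
  ∃ C : LieIdeal F L,
    B.toSubmodule ⊔ (C : Submodule F L) = ⊤ ∧
    ∃ D : LieIdeal F L, (∀ x ∈ D, x ∈ B) ∧ ∀ x ∈ B, x ∈ C → x ∈ D

/-- A maximal subalgebra of `L`: proper, and maximal among proper subalgebras. -/
def IsMaximalSubalgebra (M : LieSubalgebra F L) : Prop :=
  M ≠ ⊤ ∧ ∀ K : LieSubalgebra F L, M < K → K = ⊤

/-- `B` is a maximal subalgebra of the subalgebra `C`:
`B` is a proper subalgebra of `C`, maximal among proper subalgebras contained in `C`. -/
def IsMaximalSubalgebraOf (B C : LieSubalgebra F L) : Prop :=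
  B < C ∧ ∀ K : LieSubalgebra F L, B < K → K ≤ C → K = C

/-- A maximal nilpotent subalgebra of `L`:
nilpotent and maximal among nilpotent subalgebras. -/
def IsMaximalNilpotentSubalgebra (C : LieSubalgebra F L) : Prop :=
  LieModule.IsNilpotent C C ∧
    ∀ D : LieSubalgebra F L, LieModule.IsNilpotent D D → C ≤ D → C = D

/-- The natural quotient map `L → L ⧸ I` as a morphism of Lie algebras. -/
def quotMk (I : LieIdeal F L) : L →ₗ⁅F⁆ L ⧸ I :=
  { (LieSubmodule.Quotient.mk' I).toLinearMap with
    map_lie' := fun {_ _} => rfl }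

/-- A supersolvable Lie algebra: there is a chain of ideals `0 = L_0 ⊆ ⋯ ⊆ L_n = L`
with `dim L_i = i` for each `0 ≤ i ≤ n`. -/
def IsSupersolvable (L : Type*) [LieRing L] [LieAlgebra F L] : Prop :=
  ∃ (n : ℕ) (c : ℕ → LieIdeal F L), Monotone c ∧ c 0 = ⊥ ∧ c n = ⊤ ∧
    ∀ i ≤ n, Module.finrank F (c i) = i

/-- A minimal abelian ideal of `L`: a nonzero abelian ideal `A` such that the only
ideals of `L` contained in `A` are `0` and `A`. -/
def IsMinimalAbelianIdeal (A : LieIdeal F L) : Prop :=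
  A ≠ ⊥ ∧ IsLieAbelian A ∧ ∀ I : LieIdeal F L, I ≤ A → I = ⊥ ∨ I = A

/-- The one-dimensional subspace spanned by `x`, as a Lie subalgebra
(it is closed under the bracket since `⁅x,x⁆ = 0`). -/
def lineSpan (x : L) : LieSubalgebra F L :=
  { Submodule.span F {x} with
    lie_mem' := by
      intro a b ha hb
      replace ha : a ∈ Submodule.span F {x} := ha
      replace hb : b ∈ Submodule.span F {x} := hb
      rw [Submodule.mem_span_singleton] at ha hb
      obtain ⟨c, rfl⟩ := ha
      obtain ⟨d, rfl⟩ := hb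
      show ⁅c • x, d • x⁆ ∈ Submodule.span F {x}
      simp }

/-- The Frattini subalgebra of a Lie algebra: the intersection of all maximal subalgebras. -/
def frattiniSubalgebra (L : Type*) [LieRing L] [LieAlgebra F L] : LieSubalgebra F L :=
  sInf {M : LieSubalgebra F L | IsMaximalSubalgebra F M}

/-- An almost abelian Lie algebra `K`: `K = K² ⊕ Fx` for some `x ∈ K`, where the derived
subalgebra `K²` is abelian and `⁅x, y⁆ = y` for all `y ∈ K²`. -/
def IsAlmostAbelian (K : Type*) [LieRing K] [LieAlgebra F K] : Prop :=
  ∃ x : K, IsLieAbelian (LieAlgebra.derivedSeries F K 1) ∧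
    (∀ y ∈ LieAlgebra.derivedSeries F K 1, ⁅x, y⁆ = y) ∧
    (LieAlgebra.derivedSeries F K 1 : Submodule F K) ⊔ Submodule.span F {x} = ⊤ ∧
    (LieAlgebra.derivedSeries F K 1 : Submodule F K) ⊓ Submodule.span F {x} = ⊥

end Defs

/-!
Let `S = L⁽ᵏ⁾` be the term at which the derived series stabilises, so `⁅S, S⁆ = S`. Each
`x ∈ S` lies in a maximal nilpotent subalgebra `U`, a c-ideal with witnesses `C` and `D ≤ U`.
As `L = U + C`, the quotient `L ⧸ C` is an image of `U`, hence solvable, so the perfect ideal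
`S` lies in `C`. Thus `x ∈ U ∩ C ≤ D`, and `D` is solvable, being inside `U`; so `S` lies in the
radical. A perfect ideal inside a solvable one is zero, so `S = 0`.
-/

namespace LieAlgebra

variable {R L : Type*} [CommRing R] [LieRing L] [LieAlgebra R L] {I : LieIdeal R L}

theorem derivedSeriesOfIdeal_eq_self_of_lie_eq_self (hI : ⁅I, I⁆ = I) (k : ℕ) :
    derivedSeriesOfIdeal R L k I = I := by
  induction k with
  | zero => rfl
  | succ k ih => rw [derivedSeriesOfIdeal_succ, ih, hI]

theorem le_derivedSeries_of_lie_eq_self (hI : ⁅I, I⁆ = I) (k : ℕ) : I ≤ derivedSeries R L k := by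
  rw [← derivedSeriesOfIdeal_eq_self_of_lie_eq_self hI k, derivedSeries_def]
  exact derivedSeriesOfIdeal_mono le_top k

theorem eq_bot_of_lie_eq_self_of_le_isSolvable (hI : ⁅I, I⁆ = I) {J : LieIdeal R L}
    [IsSolvable J] (hIJ : I ≤ J) : I = ⊥ := by
  obtain ⟨k, hk⟩ := IsSolvable.solvable (R := R) (L := J)
  rw [LieIdeal.derivedSeries_eq_bot_iff] at hk
  rw [← derivedSeriesOfIdeal_eq_self_of_lie_eq_self hI k, ← le_bot_iff, ← hk]
  exact derivedSeriesOfIdeal_mono hIJ k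

theorem exists_lie_derivedSeries_eq_self [IsArtinian R L] :
    ∃ k, ⁅derivedSeries R L k, derivedSeries R L k⁆ = derivedSeries R L k := by
  have : WellFoundedGT (LieIdeal R L)ᵒᵈ := LieSubmodule.wellFoundedLT_of_isArtinian R L L
  obtain ⟨k, hk⟩ := this.monotone_chain_condition
    ⟨fun k ↦ OrderDual.toDual (derivedSeries R L k), fun _ _ h ↦ derivedSeriesOfIdeal_antitone _ h⟩
  refine ⟨k, ?_⟩
  rw [derivedSeries_def, ← derivedSeriesOfIdeal_succ]
  exact (hk (k + 1) k.le_succ).symm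

end LieAlgebra

section Field

variable {F L : Type*} [Field F] [LieRing L] [LieAlgebra F L]

open LieAlgebra

theorem isSolvable_quotient_of_sup_eq_top {B : LieSubalgebra F L} [IsSolvable B]
    {J : LieIdeal F L} (hBJ : B.toSubmodule ⊔ (J : Submodule F L) = ⊤) :
    IsSolvable (L ⧸ J) := by
  refine Function.Surjective.lieAlgebra_isSolvable (f := (quotMk F J).comp B.incl) fun z ↦ ?_
  obtain ⟨y, rfl⟩ := LieSubmodule.Quotient.surjective_mk' J z
  obtain ⟨b, hb, c, hc, rfl⟩ := Submodule.mem_sup.mp (hBJ ▸ Submodule.mem_top : y ∈ _)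
  refine ⟨⟨b, hb⟩, ?_⟩
  change LieSubmodule.Quotient.mk' J b = LieSubmodule.Quotient.mk' J (b + c)
  rw [map_add, (LieSubmodule.Quotient.mk_eq_zero J).mpr hc, add_zero]

theorem le_of_lie_eq_self_of_isSolvable_quotient {I J : LieIdeal F L} (hI : ⁅I, I⁆ = I)
    [IsSolvable (L ⧸ J)] : I ≤ J := by
  obtain ⟨k, hk⟩ := IsSolvable.solvable (R := F) (L := L ⧸ J)
  intro x hx
  have hx' : quotMk F J x ∈ derivedSeries F (L ⧸ J) k :=
    LieIdeal.derivedSeries_map_le k (LieIdeal.mem_map (le_derivedSeries_of_lie_eq_self hI k hx))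
  rw [hk, LieSubmodule.mem_bot] at hx'
  exact (LieSubmodule.Quotient.mk_eq_zero J).mp hx'

theorem IsCIdeal.mem_radical_of_mem_of_lie_eq_self {B : LieSubalgebra F L} [IsSolvable B]
    (hB : IsCIdeal F B) {I : LieIdeal F L} (hI : ⁅I, I⁆ = I) {x : L} (hxB : x ∈ B)
    (hxI : x ∈ I) : x ∈ radical F L := by
  obtain ⟨C, hBC, D, hDB, hBCD⟩ := hB
  have : IsSolvable (L ⧸ C) := isSolvable_quotient_of_sup_eq_top hBC
  have hD : IsSolvable D :=
    (LieSubalgebra.inclusion_injective (K := D.toLieSubalgebra) hDB).lieAlgebra_isSolvable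
  have hDrad : D ≤ radical F L := le_sSup hD
  exact hDrad (hBCD x hxB (le_of_lie_eq_self_of_isSolvable_quotient hI hxI))

instance (x : L) : IsLieAbelian (lineSpan F x) := by
  constructor
  rintro ⟨a, ha⟩ ⟨b, hb⟩
  obtain ⟨c, rfl⟩ := Submodule.mem_span_singleton.mp ha
  obtain ⟨d, rfl⟩ := Submodule.mem_span_singleton.mp hb
  ext
  simp

variable [FiniteDimensional F L]

theorem exists_isMaximalNilpotentSubalgebra_le {K : LieSubalgebra F L}
    (hK : LieModule.IsNilpotent K K) : ∃ U, IsMaximalNilpotentSubalgebra F U ∧ K ≤ U := by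
  obtain ⟨U, ⟨hU, hKU⟩, hmax⟩ := wellFounded_gt.has_min
    {U : LieSubalgebra F L | LieModule.IsNilpotent U U ∧ K ≤ U} ⟨K, hK, le_rfl⟩
  exact ⟨U, ⟨hU, fun D hD hUD ↦ eq_of_le_of_not_lt hUD (hmax D ⟨hD, hKU.trans hUD⟩)⟩, hKU⟩

theorem exists_isMaximalNilpotentSubalgebra_mem (x : L) :
    ∃ U, IsMaximalNilpotentSubalgebra F U ∧ x ∈ U := by
  obtain ⟨U, hU, hxU⟩ := exists_isMaximalNilpotentSubalgebra_le (inferInstance :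
    LieModule.IsNilpotent (lineSpan F x) (lineSpan F x))
  exact ⟨U, hU, hxU (Submodule.mem_span_singleton_self x)⟩

end Field

/-- If every maximal nilpotent subalgebra of `L` is a c-ideal of `L`,
then `L` is solvable. -/
theorem isSolvable_of_forall_maximalNilpotent_isCIdeal {F L : Type*} [Field F] [LieRing L]
    [LieAlgebra F L] [FiniteDimensional F L]
    (h : ∀ C : LieSubalgebra F L, IsMaximalNilpotentSubalgebra F C → IsCIdeal F C) :
    LieAlgebra.IsSolvable L := by
  obtain ⟨k, hk⟩ := LieAlgebra.exists_lie_derivedSeries_eq_self (R := F) (L := L)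
  have hrad : LieAlgebra.derivedSeries F L k ≤ LieAlgebra.radical F L := fun x hx ↦ by
    obtain ⟨U, hU, hxU⟩ := exists_isMaximalNilpotentSubalgebra_mem (F := F) x
    have : LieModule.IsNilpotent U U := hU.1
    exact (h U hU).mem_radical_of_mem_of_lie_eq_self hk hxU hx
  exact LieAlgebra.IsSolvable.mk (LieAlgebra.eq_bot_of_lie_eq_self_of_le_isSolvable hk hrad)
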